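/- arXiv:1209.1496 — 3 statements merged into one kernel-verified Lean document; each statement's English description precedes it below -/
import Mathlib

section
/- Let d ≥ 1 be an integer, M be a finite matroid, N be a minor of M, and X ⊆ E(N). If X is d-thick in M, then X is d-thick in N. -/
open Set
open scoped Classical

namespace Matroid

variable {α β : Type*}

/-- The rank of a set `X` in a matroid `M`: the maximum size of an independent subset of `X`
(appropriate for finite matroids). -/
noncomputable def rk (M : Matroid α) (X : Set α) : ℕ :=
  sSup {n | ∃ I, I ⊆ X ∧ M.Indep I ∧ I.ncard = n}

/-- The rank `r(M)` of a matroid `M`. -/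
noncomputable def rank (M : Matroid α) : ℕ := M.rk M.E

/-- The deletion `M \ D` of a set `D` from `M`. -/
def delete' (M : Matroid α) (D : Set α) : Matroid α := M ↾ (M.E \ D)

/-- The contraction `M / C` of a set `C` in `M`, defined via duality. -/
def contract' (M : Matroid α) (C : Set α) : Matroid α := (M✶.delete' C)✶

/-- `N` is a minor of `M`, i.e. `N = M / C \ D` for some sets `C` and `D`. -/
def IsMinor' (N M : Matroid α) : Prop := ∃ C D : Set α, (M.contract' C).delete' D = N

/-- An isomorphism between matroids, possibly on different ground types. -/
def IsIso (M : Matroid α) (N : Matroid β) : Prop :=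
  ∃ e : M.E ≃ N.E, ∀ I : Set M.E, M.Indep ((↑) '' I) ↔ N.Indep ((↑) '' (e '' I))

/-- `N` is isomorphic to the uniform matroid `U_{k,n}`: the ground set has `n` elements and
the independent sets are exactly the subsets with at most `k` elements. -/
def IsUnif (N : Matroid α) (k n : ℕ) : Prop :=
  N.E.Finite ∧ N.E.ncard = n ∧ ∀ I ⊆ N.E, (N.Indep I ↔ I.ncard ≤ k)

/-- `M` has a minor isomorphic to `U_{k,n}`. -/
def HasUnifMinor (M : Matroid α) (k n : ℕ) : Prop :=
  ∃ N : Matroid α, N.IsMinor' M ∧ N.IsUnif k n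

/-- `τ_a(M)`: the minimum size of a collection of subsets of `E(M)`, each of rank at most `a`,
whose union is `E(M)`. -/
noncomputable def tau (M : Matroid α) (a : ℕ) : ℕ :=
  sInf {n | ∃ 𝒞 : Finset (Set α),
    𝒞.card = n ∧ (∀ X ∈ 𝒞, X ⊆ M.E ∧ M.rk X ≤ a) ∧ M.E ⊆ ⋃₀ ↑𝒞}

/-- `M` is `d`-thick: every collection of sets, each of rank less than `r(M)`, whose union
is `E(M)`, has at least `d` members. -/
def Thick (M : Matroid α) (d : ℕ) : Prop :=
  ∀ 𝒞 : Finset (Set α), (∀ X ∈ 𝒞, X ⊆ M.E ∧ M.rk X < M.rank) → M.E ⊆ ⋃₀ ↑𝒞 → d ≤ 𝒞.card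

/-- A set `X` is `d`-thick in `M` if the restriction `M|X` is `d`-thick. -/
def ThickIn (M : Matroid α) (d : ℕ) (X : Set α) : Prop := (M ↾ X).Thick d

/-- A collection of sets is simple in `M` if its members are pairwise dissimilar,
i.e. distinct members have distinct closures. -/
def SimpleColl (M : Matroid α) (𝒳 : Finset (Set α)) : Prop :=
  ∀ X ∈ 𝒳, ∀ Y ∈ 𝒳, M.closure X = M.closure Y → X = Y

/-- `ε_M(𝒳)`: the maximum size of a subcollection of `𝒳` that is simple in `M`. -/
noncomputable def eps (M : Matroid α) (𝒳 : Finset (Set α)) : ℕ :=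
  sSup {n | ∃ 𝒴 : Finset (Set α), 𝒴 ⊆ 𝒳 ∧ M.SimpleColl 𝒴 ∧ 𝒴.card = n}

/-- `𝒳` is `d`-firm in `M`: every subcollection `𝒳'` with `|𝒳'| > |𝒳|/d` has the same rank
as `𝒳`. -/
def Firm (M : Matroid α) (d : ℕ) (𝒳 : Finset (Set α)) : Prop :=
  ∀ 𝒳' ⊆ 𝒳, 𝒳.card < d * 𝒳'.card → M.rk (⋃₀ ↑𝒳') = M.rk (⋃₀ ↑𝒳)

/-- `ℱ` is a cover of the collection `𝒳` in `M`: every member of `𝒳` is contained in a member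
of `ℱ`. -/
def CoverOf (M : Matroid α) (ℱ 𝒳 : Finset (Set α)) : Prop :=
  (∀ F ∈ ℱ, F ⊆ M.E) ∧ ∀ X ∈ 𝒳, ∃ F ∈ ℱ, X ⊆ F

/-- `ℱ` is a cover of the matroid `M`: every element of `E(M)` lies in a member of `ℱ`. -/
def CoverOfGround (M : Matroid α) (ℱ : Finset (Set α)) : Prop :=
  (∀ F ∈ ℱ, F ⊆ M.E) ∧ M.E ⊆ ⋃₀ ↑ℱ

/-- The weight `wt^d_M(ℱ) = Σ_{F ∈ ℱ} d^{r_M(F)}`. -/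
noncomputable def wt (M : Matroid α) (d : ℕ) (ℱ : Finset (Set α)) : ℕ :=
  ∑ F ∈ ℱ, d ^ M.rk F

/-- `ℱ` is a `d`-minimal cover of the collection `𝒳` in `M`. -/
def MinimalCoverOf (M : Matroid α) (d : ℕ) (ℱ 𝒳 : Finset (Set α)) : Prop :=
  M.CoverOf ℱ 𝒳 ∧ ∀ ℱ' : Finset (Set α), M.CoverOf ℱ' 𝒳 → M.wt d ℱ ≤ M.wt d ℱ'

/-- `ℱ` is a `d`-minimal cover of the matroid `M`. -/
def MinimalCoverOfGround (M : Matroid α) (d : ℕ) (ℱ : Finset (Set α)) : Prop :=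
  M.CoverOfGround ℱ ∧ ∀ ℱ' : Finset (Set α), M.CoverOfGround ℱ' → M.wt d ℱ ≤ M.wt d ℱ'

/-- `τ^d(M)`: the minimum weight of a cover of `M`. -/
noncomputable def tauW (M : Matroid α) (d : ℕ) : ℕ :=
  sInf {n | ∃ ℱ : Finset (Set α), M.CoverOfGround ℱ ∧ M.wt d ℱ = n}

/-- `𝒳` is `d`-scattered in `M`: every member of `𝒳` is `d`-thick in `M`, and
`{cl_M(X) : X ∈ 𝒳}` is a `d`-minimal cover of `𝒳` in `M`. -/
def Scattered (M : Matroid α) (d : ℕ) (𝒳 : Finset (Set α)) : Prop :=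
  (∀ X ∈ 𝒳, M.ThickIn d X) ∧ M.MinimalCoverOf d (𝒳.image M.closure) 𝒳

/-- `(M, 𝒮; L)` is an `(a, q, h, d)`-pyramid, where `h = L.length` and `L` lists the
elements `e_1, …, e_h`. -/
def IsPyramid (M : Matroid α) (𝒮 : Finset (Set α)) (L : List α) (a q d : ℕ) : Prop :=
  L.Nodup ∧ M.Indep {x | x ∈ L} ∧
  𝒮.Nonempty ∧
  (∀ S ∈ 𝒮, S ⊆ M.E ∧ M.rk S = a) ∧
  (∀ S ∈ 𝒮, M.rk (S ∪ {x | x ∈ L}) = M.rk S + M.rk {x | x ∈ L}) ∧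
  (∀ i < L.length, ∀ S ∈ 𝒮, ∃ f : Fin q → Set α,
    (∀ j, f j ∈ 𝒮) ∧
    (∀ j k, j ≠ k →
      (M.contract' {x | x ∈ L.take i}).closure (f j) ≠
        (M.contract' {x | x ∈ L.take i}).closure (f k)) ∧
    (∀ j, (M.contract' {x | x ∈ L.take (i+1)}).closure (f j) =
      (M.contract' {x | x ∈ L.take (i+1)}).closure S)) ∧
  (∀ S ∈ 𝒮, M.ThickIn d S)

/-- `M` is representable over the field `F`. -/
def RepresentableOver (M : Matroid α) (F : Type*) [Field F] : Prop :=
  ∃ (n : ℕ) (φ : α → (Fin n → F)),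
    ∀ I ⊆ M.E, (M.Indep I ↔ LinearIndependent F (fun x : I => φ x))

end Matroid

/-!
If `W ⊆ X` spans `X` in `M`, then it still spans `X` in any contraction `M ／ C`, and deletion
does not change ranks inside `X`. So a subset of `X` of rank less than `X` in a minor `N` already
has rank less than `X` in `M`, and every cover of `X` witnessing that `X` is not thick in `N`
witnesses the same in `M`.
-/

namespace Matroid

section

variable {α : Type*} {M N : Matroid α} {C W X Y : Set α} {d : ℕ}

lemma contract'_eq_contract (M : Matroid α) (C : Set α) : M.contract' C = M ／ C := rfl

lemma rk_restrict_of_subset (h : Y ⊆ X) : (M ↾ X).rk Y = M.rk Y := by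
  unfold rk
  congr 1
  ext n
  refine exists_congr fun I ↦ and_congr_right fun hIY ↦ and_congr_left' ?_
  rw [restrict_indep_iff, and_iff_left (hIY.trans h)]

lemma rank_restrict (M : Matroid α) (X : Set α) : (M ↾ X).rank = M.rk X :=
  rk_restrict_of_subset subset_rfl

lemma cast_rk_eq_eRk [M.RankFinite] (X : Set α) : (M.rk X : ℕ∞) = M.eRk X := by
  obtain ⟨I, hI⟩ := M.exists_isBasis' X
  have hIfin : I.Finite := hI.indep.finite
  have hmax : IsGreatest {n | ∃ J, J ⊆ X ∧ M.Indep J ∧ J.ncard = n} I.ncard := by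
    refine ⟨⟨I, hI.subset, hI.indep, rfl⟩, ?_⟩
    rintro _ ⟨J, hJX, hJ, rfl⟩
    rw [← Nat.cast_le (α := ℕ∞), hJ.finite.cast_ncard_eq, hIfin.cast_ncard_eq,
      hI.encard_eq_eRk]
    exact hJ.encard_le_eRk_of_subset hJX
  rw [rk, hmax.csSup_eq, hIfin.cast_ncard_eq, hI.encard_eq_eRk]

lemma rk_lt_rk_iff [M.RankFinite] : M.rk W < M.rk X ↔ M.eRk W < M.eRk X := by
  rw [← cast_rk_eq_eRk, ← cast_rk_eq_eRk, Nat.cast_lt]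

lemma contract_closure_congr (h : M.closure W = M.closure X) (C : Set α) :
    (M ／ C).closure W = (M ／ C).closure X := by
  rw [contract_closure_eq, contract_closure_eq, ← closure_union_closure_left_eq, h,
    closure_union_closure_left_eq]

lemma rk_lt_of_rk_contract_lt [M.RankFinite] (hWX : W ⊆ X)
    (h : (M ／ C).rk W < (M ／ C).rk X) : M.rk W < M.rk X := by
  rw [rk_lt_rk_iff] at h ⊢
  by_contra! hle
  have hcl : M.closure W = M.closure X :=
    (M.isRkFinite_set W).closure_eq_closure_of_subset_of_eRk_ge_eRk hWX hle
  rw [← eRk_closure_eq, contract_closure_congr hcl, eRk_closure_eq] at h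
  exact h.false

lemma ThickIn.of_rk_lt_imp (hM : M.ThickIn d X)
    (h : ∀ W ⊆ X, N.rk W < N.rk X → M.rk W < M.rk X) : N.ThickIn d X := by
  intro 𝒞 h𝒞 hcover
  refine hM 𝒞 (fun W hW ↦ ?_) hcover
  obtain ⟨hWX : W ⊆ X, hlt⟩ := h𝒞 W hW
  rw [rank_restrict, rk_restrict_of_subset hWX] at hlt ⊢
  exact ⟨hWX, h W hWX hlt⟩

end

theorem statement4_general {α : Type*} (d : ℕ)
    (M N : Matroid α) (hM : M.Finite) (hN : N.IsMinor' M)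
    (X : Set α) (hX : X ⊆ N.E) (hthick : M.ThickIn d X) :
    N.ThickIn d X := by
  obtain ⟨C, D, rfl⟩ := hN
  refine hthick.of_rk_lt_imp fun W hWX hlt ↦ rk_lt_of_rk_contract_lt (C := C) hWX ?_
  have hXE : X ⊆ (M.contract' C).E \ D := hX
  rwa [delete', rk_restrict_of_subset (hWX.trans hXE), rk_restrict_of_subset hXE,
    contract'_eq_contract] at hlt

/-- If `d ≥ 1`, `N` is a minor of a finite matroid `M`, `X ⊆ E(N)` and `X` is
`d`-thick in `M`, then `X` is `d`-thick in `N`. -/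
theorem statement4 {α : Type*} (d : ℕ) (hd : 1 ≤ d)
    (M N : Matroid α) (hM : M.Finite) (hN : N.IsMinor' M)
    (X : Set α) (hX : X ⊆ N.E) (hthick : M.ThickIn d X) :
    N.ThickIn d X :=
  statement4_general d M N hM hN X hX hthick

end Matroid
end

section
/- Let a and b be integers with 1 ≤ a < b. If M is a finite matroid that is C(b, a)-thick (where C(b, a) is the binomial coefficient) and r(M) > a, then M has a minor isomorphic to U_{a+1,b}. -/
/-!
Contracting `r(M) - a - 1` elements of a basis keeps `M` thick and lowers its rank to `a + 1`.
In a matroid of rank `a + 1`, take a maximal set `X` all of whose `(a + 1)`-subsets are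
independent. Every element outside `X` is spanned by at most `a` elements of `X`, so the
closures of the `a`-subsets of `X` cover the matroid by `C(|X|, a)` sets of rank `a`;
thickness then forces `|X| ≥ b`, and `b` elements of `X` form a `U_{a+1,b}`-restriction.
-/

open Set
open scoped Classical

theorem Nat.choose_lt_choose_of_lt {m n k : ℕ} (hk : 0 < k) (hkn : k ≤ n) (hmn : m < n) :
    m.choose k < n.choose k := by
  obtain ⟨k, rfl⟩ : ∃ k', k = k' + 1 := ⟨k - 1, by omega⟩
  obtain ⟨n, rfl⟩ : ∃ n', n = n' + 1 := ⟨n - 1, by omega⟩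
  have hm : m.choose (k + 1) ≤ n.choose (k + 1) := Nat.choose_le_choose _ (by omega)
  have hpos : 0 < n.choose k := Nat.choose_pos (by omega)
  rw [Nat.choose_succ_succ']
  omega

namespace Matroid

variable {α : Type*} {M : Matroid α} {B C I X : Set α} {a b d k : ℕ} {e : α}

section RankFinite

variable [M.RankFinite]

lemma IsBasis'.rk_eq_ncard (hI : M.IsBasis' I X) : M.rk X = I.ncard := by
  refine IsGreatest.csSup_eq ⟨⟨I, hI.subset, hI.indep, rfl⟩, ?_⟩
  rintro _ ⟨J, hJX, hJ, rfl⟩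
  have hJI : J.encard ≤ I.encard := hI.encard_eq_eRk ▸ hJ.encard_le_eRk_of_subset hJX
  rwa [← hJ.finite.cast_ncard_eq, ← hI.indep.finite.cast_ncard_eq, Nat.cast_le] at hJI

lemma cast_rk (X : Set α) : (M.rk X : ℕ∞) = M.eRk X := by
  obtain ⟨I, hI⟩ := M.exists_isBasis' X
  rw [hI.rk_eq_ncard, hI.indep.finite.cast_ncard_eq, hI.encard_eq_eRk]

lemma cast_rank : (M.rank : ℕ∞) = M.eRank := by
  rw [rank, cast_rk, eRk_ground]

lemma Indep.rk_eq_ncard (hI : M.Indep I) : M.rk I = I.ncard :=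
  hI.isBasis_self.isBasis'.rk_eq_ncard

lemma IsBase.ncard_eq_rank (hB : M.IsBase B) : B.ncard = M.rank :=
  hB.isBasis_ground.isBasis'.rk_eq_ncard.symm

lemma Indep.ncard_le_rank (hI : M.Indep I) : I.ncard ≤ M.rank := by
  rw [← Nat.cast_le (α := ℕ∞), cast_rank, hI.finite.cast_ncard_eq]
  exact hI.encard_le_eRank

lemma rk_closure (X : Set α) : M.rk (M.closure X) = M.rk X := by
  exact_mod_cast (cast_rk _).trans ((M.eRk_closure_eq X).trans (cast_rk X).symm)

lemma rk_le_ncard (hX : X.Finite) : M.rk X ≤ X.ncard := by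
  rw [← Nat.cast_le (α := ℕ∞), cast_rk, hX.cast_ncard_eq]
  exact M.eRk_le_encard X

end RankFinite

lemma Indep.eRk_contract_add_encard (hC : M.Indep C) (hX : X ⊆ (M ／ C).E) :
    (M ／ C).eRk X + C.encard = M.eRk (X ∪ C) := by
  obtain ⟨J, hJ⟩ := (M ／ C).exists_isBasis X hX
  have hJC : Disjoint J C := (subset_sdiff.1 (hJ.subset.trans hX)).2
  rw [hJ.eRk_eq_encard, (hC.union_isBasis_union_of_contract_isBasis hJ).eRk_eq_encard,
    encard_union_eq hJC]

lemma Indep.rk_contract_add_ncard [M.RankFinite] (hC : M.Indep C) (hX : X ⊆ (M ／ C).E) :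
    (M ／ C).rk X + C.ncard = M.rk (X ∪ C) := by
  have h := hC.eRk_contract_add_encard hX
  rw [← cast_rk, ← cast_rk, ← hC.finite.cast_ncard_eq] at h
  exact_mod_cast h

lemma Indep.rank_contract_add_ncard [M.RankFinite] (hC : M.Indep C) :
    (M ／ C).rank + C.ncard = M.rank := by
  rw [rank, hC.rk_contract_add_ncard subset_rfl, contract_ground,
    sdiff_union_of_subset hC.subset_ground, rank]

lemma Thick.contract [M.RankFinite] (hM : M.Thick d) (hC : M.Indep C) (hCr : C.ncard < M.rank) :
    (M ／ C).Thick d := by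
  intro 𝒞 h𝒞 hcover
  have hrank := hC.rank_contract_add_ncard
  obtain ⟨X₀, hX₀⟩ : 𝒞.Nonempty := by
    rw [Finset.nonempty_iff_ne_empty]
    rintro rfl
    have hE : (M ／ C).E = ∅ := by simpa using hcover
    have : (M ／ C).rank = 0 := by rw [rank, hE, (M ／ C).empty_indep.rk_eq_ncard, ncard_empty]
    omega
  refine (hM (𝒞.image (· ∪ C)) ?_ ?_).trans Finset.card_image_le
  · simp only [Finset.mem_image]
    rintro _ ⟨X, hX, rfl⟩
    obtain ⟨hXE, hXr⟩ := h𝒞 X hX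
    have := hC.rk_contract_add_ncard hXE
    exact ⟨union_subset (hXE.trans sdiff_subset) hC.subset_ground, by omega⟩
  · intro x hx
    by_cases hxC : x ∈ C
    · exact ⟨X₀ ∪ C, by simpa using ⟨X₀, hX₀, rfl⟩, Or.inr hxC⟩
    · obtain ⟨X, hX, hxX⟩ := hcover ⟨hx, hxC⟩
      exact ⟨X ∪ C, by simpa using ⟨X, hX, rfl⟩, Or.inl hxX⟩

-- `ncard` is `0` on infinite sets; the notion is only used inside finite ground sets.
def SubsetsIndepUpTo (M : Matroid α) (k : ℕ) (X : Set α) : Prop :=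
  ∀ S ⊆ X, S.ncard ≤ k → M.Indep S

lemma exists_subset_mem_closure_of_maximal
    (hX : Maximal (fun Y ↦ Y ⊆ M.E ∧ M.SubsetsIndepUpTo (k + 1) Y) X) (he : e ∈ M.E)
    (heX : e ∉ X) : ∃ S ⊆ X, S.ncard ≤ k ∧ e ∈ M.closure S := by
  have heXE : insert e X ⊆ M.E := insert_subset he hX.prop.1
  obtain ⟨S, hSX, hSk, hSdep⟩ : ∃ S ⊆ insert e X, S.ncard ≤ k + 1 ∧ ¬ M.Indep S := by
    by_contra! h
    exact heX (hX.mem_of_prop_insert ⟨heXE, h⟩)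
  have hS'X : S \ {e} ⊆ X := sdiff_singleton_subset_iff.2 hSX
  have heS : e ∈ S := by
    by_contra heS
    exact hSdep (hX.prop.2 S (by rwa [← sdiff_singleton_eq_self heS]) hSk)
  have hS'k : (S \ {e}).ncard ≤ k := by
    rw [ncard_sdiff_singleton_of_mem heS]
    omega
  refine ⟨S \ {e}, hS'X, hS'k, ?_⟩
  rw [(hX.prop.2 _ hS'X (by omega)).mem_closure_iff, insert_sdiff_singleton, insert_eq_of_mem heS]
  exact Or.inl ⟨hSdep, hSX.trans heXE⟩

lemma ground_subset_sUnion_closure_powersetCard {X : Finset α} (ha : 1 ≤ a) (haX : a ≤ X.card)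
    (hX : Maximal (fun Y ↦ Y ⊆ M.E ∧ M.SubsetsIndepUpTo (a + 1) Y) X) :
    M.E ⊆ ⋃₀ ↑((X.powersetCard a).image fun A : Finset α ↦ M.closure A) := by
  intro e he
  obtain ⟨S, hSX, hSa, heS⟩ : ∃ S ⊆ (X : Set α), S.ncard ≤ a ∧ e ∈ M.closure S := by
    by_cases heX : e ∈ X
    · exact ⟨{e}, singleton_subset_iff.2 heX, by simpa using ha, M.mem_closure_of_mem' rfl he⟩
    · exact exists_subset_mem_closure_of_maximal hX he heX
  obtain ⟨A, hSA, hAX, hA⟩ := exists_subsuperset_card_eq hSX hSa (by simpa using haX)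
  lift A to Finset α using X.finite_toSet.subset hAX
  refine mem_sUnion.2 ⟨M.closure A, ?_, M.closure_subset_closure hSA heS⟩
  simpa using ⟨A, ⟨by exact_mod_cast hAX, by simpa using hA⟩, rfl⟩

lemma exists_subsetsIndepUpTo_of_thick [M.Finite] (ha : 1 ≤ a) (hab : a < b)
    (hM : M.Thick (b.choose a)) (hr : M.rank = a + 1) :
    ∃ X ⊆ M.E, X.ncard = b ∧ M.SubsetsIndepUpTo (a + 1) X := by
  obtain ⟨B, hB⟩ := M.exists_isBase
  obtain ⟨X, hBX, hX⟩ := Set.Finite.exists_le_maximal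
    (M.ground_finite.finite_subsets.subset fun Y hY ↦ hY.1)
    (show B ∈ {Y | Y ⊆ M.E ∧ M.SubsetsIndepUpTo (a + 1) Y} from
      ⟨hB.subset_ground, fun S hS _ ↦ hB.indep.subset hS⟩)
  have hXfin : X.Finite := M.ground_finite.subset hX.prop.1
  suffices hbX : b ≤ X.ncard by
    obtain ⟨Y, hYX, hY⟩ := exists_subset_card_eq hbX
    exact ⟨Y, hYX.trans hX.prop.1, hY, fun S hS ↦ hX.prop.2 S (hS.trans hYX)⟩
  by_contra! hXb
  lift X to Finset α using hXfin
  have haX : a + 1 ≤ X.card := by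
    simpa [hB.ncard_eq_rank, hr] using ncard_le_ncard hBX X.finite_toSet
  have hcard := hM ((X.powersetCard a).image fun A : Finset α ↦ M.closure A) (fun F hF ↦ ?_)
    (ground_subset_sUnion_closure_powersetCard ha (by omega) hX)
  · have hlt : (X.powersetCard a).card < b.choose a := by
      rw [Finset.card_powersetCard]
      exact Nat.choose_lt_choose_of_lt (by omega) hab.le (by simpa using hXb)
    exact absurd (hcard.trans Finset.card_image_le) hlt.not_ge
  · obtain ⟨A, hA, rfl⟩ := Finset.mem_image.1 hF
    have hAr := M.rk_le_ncard A.finite_toSet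
    rw [ncard_coe_finset, (Finset.mem_powersetCard.1 hA).2] at hAr
    exact ⟨M.closure_subset_ground A, by rw [rk_closure]; omega⟩

lemma isUnif_restrict [M.RankFinite] (hr : M.rank = k) (hX : X.Finite)
    (hXk : M.SubsetsIndepUpTo k X) : (M ↾ X).IsUnif k X.ncard :=
  ⟨hX, rfl, fun I hI ↦ by
    rw [restrict_indep_iff]
    exact ⟨fun h ↦ hr ▸ h.1.ncard_le_rank, fun h ↦ ⟨hXk I hI h, hI⟩⟩⟩

lemma isMinor'_restrict_contract (hX : X ⊆ (M ／ C).E) : ((M ／ C) ↾ X).IsMinor' M :=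
  ⟨C, (M ／ C).E \ X, delete_compl hX⟩

end Matroid

namespace Matroid

/-- If `1 ≤ a < b` and `M` is a finite `C(b,a)`-thick matroid with
`r(M) > a`, then `M` has a minor isomorphic to `U_{a+1,b}`. -/
theorem statement5 {α : Type*} (a b : ℕ) (ha : 1 ≤ a) (hab : a < b)
    (M : Matroid α) (hM : M.Finite) (hthick : M.Thick (b.choose a)) (hr : a < M.rank) :
    M.HasUnifMinor (a + 1) b := by
  obtain ⟨B, hB⟩ := M.exists_isBase
  obtain ⟨C, hCB, hC⟩ := exists_subset_card_eq (s := B) (n := M.rank - (a + 1))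
    (by rw [hB.ncard_eq_rank]; omega)
  have hCi : M.Indep C := hB.indep.subset hCB
  have hrank : (M ／ C).rank = a + 1 := by
    have := hCi.rank_contract_add_ncard
    omega
  obtain ⟨X, hXE, rfl, hXi⟩ :=
    exists_subsetsIndepUpTo_of_thick ha hab (hthick.contract hCi (by omega)) hrank
  exact ⟨_, isMinor'_restrict_contract hXE,
    isUnif_restrict hrank ((M ／ C).ground_finite.subset hXE) hXi⟩

end Matroid
end

section
/- Let a ≥ 1 and d ≥ 1 be integers. If M is a finite matroid and 𝒳 ⊆ ℛ_a(M) is d-scattered in M, then ε_M(𝒳) ≤ d^{r(M) - a}. -/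
open Set
open scoped Classical

/-!
Comparing the `d`-minimal cover `{cl_M(X) : X ∈ 𝒳}` with the trivial cover `{E(M)}` gives
`|{cl_M(X) : X ∈ 𝒳}| · d^a ≤ d^{r(M)}`, and a simple subcollection of `𝒳` has at most as many
members as there are distinct closures.
-/

namespace Matroid

section

variable {α : Type*} {M : Matroid α}

/-- The `ℕ`-valued rank `rk` agrees with `(eRk X).toNat`, including the junk value `0` on sets of
infinite rank. -/
lemma rk_eq_toNat_eRk (M : Matroid α) (X : Set α) : M.rk X = (M.eRk X).toNat := by
  set S := {n | ∃ I, I ⊆ X ∧ M.Indep I ∧ I.ncard = n}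
  rcases eq_top_or_lt_top (M.eRk X) with hX | hX
  · suffices hS : ¬BddAbove S by rw [rk, Nat.sSup_of_not_bddAbove hS, hX, ENat.toNat_top]
    rintro ⟨b, hb⟩
    obtain ⟨I, hIX, hI, hIcard⟩ := le_eRk_iff.mp (hX ▸ le_top : ((b + 1 : ℕ) : ℕ∞) ≤ M.eRk X)
    have hbI : b + 1 ∈ S := ⟨I, hIX, hI, by rw [ncard_def, hIcard, ENat.toNat_natCast]⟩
    exact absurd (hb hbI) (by omega)
  · obtain ⟨I, hI⟩ := M.exists_isBasis' X
    have hI_mem : I.ncard ∈ S := ⟨I, hI.subset, hI.indep, rfl⟩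
    have hI_eq : I.ncard = (M.eRk X).toNat := by rw [ncard_def, hI.encard_eq_eRk]
    have hS_le : ∀ n ∈ S, n ≤ (M.eRk X).toNat := by
      rintro n ⟨J, hJX, hJ, rfl⟩
      exact ENat.toNat_le_toNat (hJ.encard_le_eRk_of_subset hJX) hX.ne
    rw [rk, ← hI_eq]
    exact le_antisymm (csSup_le ⟨_, hI_mem⟩ (hI_eq ▸ hS_le)) (le_csSup ⟨_, hI_eq ▸ hS_le⟩ hI_mem)

lemma rk_closure_eq (M : Matroid α) (X : Set α) : M.rk (M.closure X) = M.rk X := by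
  rw [rk_eq_toNat_eRk, rk_eq_toNat_eRk, eRk_closure_eq]

lemma eps_le_card_image_closure (M : Matroid α) (𝒳 : Finset (Set α)) :
    M.eps 𝒳 ≤ (𝒳.image M.closure).card := by
  refine csSup_le ⟨0, ∅, by simp, by simp [SimpleColl], rfl⟩ ?_
  rintro n ⟨𝒴, h𝒴𝒳, h𝒴, rfl⟩
  exact Finset.card_le_card_of_injOn M.closure
    (fun X hX ↦ Finset.mem_image_of_mem _ (h𝒴𝒳 hX)) (fun X hX Y hY ↦ h𝒴 X hX Y hY)

lemma wt_image_closure_of_rk_eq {𝒳 : Finset (Set α)} {a : ℕ} (d : ℕ)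
    (h𝒳 : ∀ X ∈ 𝒳, M.rk X = a) :
    M.wt d (𝒳.image M.closure) = (𝒳.image M.closure).card * d ^ a := by
  rw [wt, Finset.sum_congr rfl (g := fun _ ↦ d ^ a), Finset.sum_const, smul_eq_mul]
  rintro F hF
  obtain ⟨X, hX, rfl⟩ := Finset.mem_image.mp hF
  rw [rk_closure_eq, h𝒳 X hX]

lemma MinimalCoverOf.wt_le_pow_rank {d : ℕ} {ℱ 𝒳 : Finset (Set α)}
    (hℱ : M.MinimalCoverOf d ℱ 𝒳) (h𝒳 : ∀ X ∈ 𝒳, X ⊆ M.E) : M.wt d ℱ ≤ d ^ M.rank := by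
  have hground : M.CoverOf {M.E} 𝒳 := ⟨by simp, fun X hX ↦ ⟨M.E, by simp, h𝒳 X hX⟩⟩
  simpa [wt, rank] using hℱ.2 {M.E} hground

end

theorem statement14_general {α : Type*} (a d : ℕ) (hd : 1 ≤ d)
    (M : Matroid α) (𝒳 : Finset (Set α))
    (h𝒳 : ∀ X ∈ 𝒳, X ⊆ M.E ∧ M.rk X = a)
    (hscat : M.Scattered d 𝒳) :
    M.eps 𝒳 ≤ d ^ (M.rank - a) := by
  have hcover := hscat.2.wt_le_pow_rank fun X hX ↦ (h𝒳 X hX).1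
  rw [wt_image_closure_of_rk_eq d fun X hX ↦ (h𝒳 X hX).2] at hcover
  have hcard : (𝒳.image M.closure).card * d ^ a ≤ d ^ (M.rank - a) * d ^ a := calc
    _ ≤ d ^ M.rank := hcover
    _ ≤ d ^ (M.rank - a + a) := Nat.pow_le_pow_right hd le_tsub_add
    _ = d ^ (M.rank - a) * d ^ a := pow_add d _ a
  exact (M.eps_le_card_image_closure 𝒳).trans
    (Nat.le_of_mul_le_mul_right hcard (pow_pos hd a))

/-- If `a, d ≥ 1`, `M` is a finite matroid and `𝒳 ⊆ ℛ_a(M)` is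
`d`-scattered in `M`, then `ε_M(𝒳) ≤ d^{r(M)-a}`. -/
theorem statement14 {α : Type*} (a d : ℕ) (ha : 1 ≤ a) (hd : 1 ≤ d)
    (M : Matroid α) (hM : M.Finite) (𝒳 : Finset (Set α))
    (h𝒳 : ∀ X ∈ 𝒳, X ⊆ M.E ∧ M.rk X = a)
    (hscat : M.Scattered d 𝒳) :
    M.eps 𝒳 ≤ d ^ (M.rank - a) :=
  statement14_general a d hd M 𝒳 h𝒳 hscat

end Matroid
end
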